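/- arXiv:2203.03406 — 2 statements merged into one kernel-verified Lean document; each statement's English description precedes it below -/
import Mathlib

section
/- Let n and k be positive integers, and let u and v be distinct vertices of the Kneser graph K(2n+k,n). If |u ∩ v| > (⌈(n-1)/(2k)⌉ - 1)·k + 1 + H(n,k), then dist(u,v) is even. -/
/-- The Kneser graph `K(m, n)`: vertices are the `n`-element subsets of an `m`-element
ground set, with edges between disjoint sets. -/
def KneserGraph (m n : ℕ) : SimpleGraph {s : Finset (Fin m) // s.card = n} where
  Adj u v := Disjoint u.1 v.1 ∧ u ≠ v
  symm := ⟨fun u v ⟨h, hne⟩ => ⟨h.symm, hne.symm⟩⟩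
  loopless := ⟨fun u ⟨_, h⟩ => h rfl⟩

/-- The geodetic interval `I[u,v]`: all vertices lying on some shortest `u,v`-path. -/
def geodInterval {V : Type*} (G : SimpleGraph V) (u v : V) : Set V :=
  {w | G.dist u w + G.dist w v = G.dist u v}

/-- `I[W] = ⋃_{u,v ∈ W} I[u,v]`. -/
def geodIntervalSet {V : Type*} (G : SimpleGraph V) (W : Set V) : Set V :=
  ⋃ (u ∈ W) (v ∈ W), geodInterval G u v

/-- `W` is a geodetic set if `I[W] = V(G)`. -/
def IsGeodeticSet {V : Type*} (G : SimpleGraph V) (W : Set V) : Prop :=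
  geodIntervalSet G W = Set.univ

/-- `W` is geodetically convex if `I[W] = W`. -/
def IsGConvex {V : Type*} (G : SimpleGraph V) (W : Set V) : Prop :=
  geodIntervalSet G W = W

/-- The geodetic hull `H[W]`: the smallest g-convex set containing `W`. -/
def geodHull {V : Type*} (G : SimpleGraph V) (W : Set V) : Set V :=
  ⋂₀ {C | IsGConvex G C ∧ W ⊆ C}

/-- `W` is a geodetic hull set if `H[W] = V(G)`. -/
def IsGeodHullSet {V : Type*} (G : SimpleGraph V) (W : Set V) : Prop :=
  geodHull G W = Set.univ

/-- The geodetic number: minimum cardinality of a geodetic set. -/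
noncomputable def geodeticNumber {V : Type*} (G : SimpleGraph V) : ℕ :=
  sInf {m | ∃ W : Set V, IsGeodeticSet G W ∧ W.ncard = m}

/-- The geodetic hull number: minimum cardinality of a geodetic hull set. -/
noncomputable def geodHullNumber {V : Type*} (G : SimpleGraph V) : ℕ :=
  sInf {m | ∃ W : Set V, IsGeodHullSet G W ∧ W.ncard = m}

/-- The function `H(n,k)` from the paper. -/
def Hfun (n k : ℕ) : ℕ := if n % k ≤ 1 then n % k + k - 2 else n % k - 2

/-- `p = (⌈(n-1)/(2k)⌉ - 1)·k + 1`, computed in `ℤ`. -/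
def pInt (n k : ℕ) : ℤ := (⌈((n : ℚ) - 1) / (2 * k)⌉ - 1) * k + 1

/-!
If `x` and `w` are adjacent in `K(2n+k, n)`, they are disjoint and miss only `k` points, so for
any vertex `y` the sizes `|x ∩ y|` and `|w ∩ y|` add up to a number between `n - k` and `n`.
Following a walk of odd length `2t + 1` from `u` to `v` this gives `|u ∩ v| ≤ t k`, while
exchanging `k` elements at a time gives a walk of length `2c` as soon as `n ≤ |u ∩ v| + c k`.
The threshold `p + H(n,k)` on `s = |u ∩ v|` is exactly what rules out a multiple of `k` in
`[s, n - s)`; so an odd distance `2t + 1` would give `n ≤ s + t k` and hence a walk of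
length `2t`.
-/

open Finset SimpleGraph

theorem Finset.card_le_card_inter_add_card_inter_add_card_compl {α : Type*} [Fintype α]
    [DecidableEq α] (u a b : Finset α) : #u ≤ #(a ∩ u) + #(b ∩ u) + #(a ∪ b)ᶜ := by
  calc #u ≤ #(u ∩ (a ∪ b)) + #(u \ (a ∪ b)) := (card_inter_add_card_sdiff _ _).ge
    _ ≤ #(a ∩ u) + #(b ∩ u) + #(a ∪ b)ᶜ := by
      gcongr
      · rw [inter_union_distrib_left, inter_comm u a, inter_comm u b]
        exact card_union_le _ _
      · intro x
        simp

theorem Finset.card_inter_add_card_inter_le_of_disjoint {α : Type*} [DecidableEq α]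
    {a b : Finset α} (u : Finset α) (hab : Disjoint a b) : #(a ∩ u) + #(b ∩ u) ≤ #u := by
  rw [← card_union_of_disjoint (hab.mono inter_subset_left inter_subset_left),
    ← union_inter_distrib_right]
  exact card_le_card inter_subset_right

namespace KneserGraph

theorem adj_of_disjoint {m n : ℕ} {u v : {s : Finset (Fin m) // s.card = n}} (hn : n ≠ 0)
    (h : Disjoint u.1 v.1) : (KneserGraph m n).Adj u v := by
  refine ⟨h, fun huv => hn ?_⟩
  rw [huv, disjoint_self_iff_empty] at h
  rw [← v.2, h, card_empty]

theorem eq_of_le_card_inter {m n : ℕ} {u v : {s : Finset (Fin m) // s.card = n}}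
    (h : n ≤ #(u.1 ∩ v.1)) : u = v := by
  have huv : u.1 ∩ v.1 = u.1 := eq_of_subset_of_card_le inter_subset_left (by rw [u.2]; exact h)
  exact Subtype.ext (eq_of_subset_of_card_le (inter_eq_left.mp huv) (by rw [u.2, v.2]))

variable {n k : ℕ}

theorem card_inter_add_card_inter_le_of_adj {a b : {s : Finset (Fin (2 * n + k)) // s.card = n}}
    (hab : (KneserGraph (2 * n + k) n).Adj a b) (u : Finset (Fin (2 * n + k))) :
    #(a.1 ∩ u) + #(b.1 ∩ u) ≤ #u :=
  card_inter_add_card_inter_le_of_disjoint u hab.1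

theorem le_card_inter_add_card_inter_add_of_adj
    {a b : {s : Finset (Fin (2 * n + k)) // s.card = n}}
    (hab : (KneserGraph (2 * n + k) n).Adj a b) (u : Finset (Fin (2 * n + k))) :
    #u ≤ #(a.1 ∩ u) + #(b.1 ∩ u) + k := by
  have hcompl : #(a.1 ∪ b.1)ᶜ = k := by
    rw [card_compl, card_union_of_disjoint hab.1, a.2, b.2, Fintype.card_fin]
    omega
  have := card_le_card_inter_add_card_inter_add_card_compl u a.1 b.1
  rwa [hcompl] at this

theorem card_inter_bounds_of_walk {x y : {s : Finset (Fin (2 * n + k)) // s.card = n}}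
    (p : (KneserGraph (2 * n + k) n).Walk x y) (t : ℕ) :
    (p.length = 2 * t → n ≤ #(x.1 ∩ y.1) + t * k) ∧
      (p.length = 2 * t + 1 → #(x.1 ∩ y.1) ≤ t * k) := by
  induction p generalizing t with
  | @nil x => exact ⟨fun _ => by simp [x.2], fun h => by simp at h⟩
  | @cons x w y hxw p ih =>
    have hlow := le_card_inter_add_card_inter_add_of_adj hxw y.1
    have hup := card_inter_add_card_inter_le_of_adj hxw y.1
    rw [y.2] at hlow hup
    rw [Walk.length_cons]
    refine ⟨fun hlen => ?_, fun hlen => ?_⟩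
    · obtain ⟨t, rfl⟩ : ∃ t', t = t' + 1 := ⟨t - 1, by omega⟩
      have := (ih t).2 (by omega)
      rw [add_mul, one_mul]
      omega
    · have := (ih t).1 (by omega)
      omega

theorem card_inter_le_of_dist_eq {u v : {s : Finset (Fin (2 * n + k)) // s.card = n}} {t : ℕ}
    (h : (KneserGraph (2 * n + k) n).dist u v = 2 * t + 1) : #(u.1 ∩ v.1) ≤ t * k := by
  obtain ⟨p, hp⟩ := exists_walk_of_dist_ne_zero (h.trans_ne (2 * t).succ_ne_zero)
  exact (card_inter_bounds_of_walk p t).2 (hp.trans h)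

theorem exists_walk_length_le_two {u v : {s : Finset (Fin (2 * n + k)) // s.card = n}}
    (h : n ≤ #(u.1 ∩ v.1) + k) :
    ∃ p : (KneserGraph (2 * n + k) n).Walk u v, p.length ≤ 2 := by
  rcases Nat.eq_zero_or_pos n with rfl | hn
  · obtain rfl := eq_of_le_card_inter (Nat.zero_le #(u.1 ∩ v.1))
    exact ⟨.nil, by simp⟩
  obtain ⟨w, hw, hwcard⟩ : ∃ w ⊆ (u.1 ∪ v.1)ᶜ, #w = n := by
    refine exists_subset_card_eq ?_
    have := card_union_add_card_inter u.1 v.1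
    rw [u.2, v.2] at this
    rw [card_compl, Fintype.card_fin]
    omega
  have hwuv : Disjoint w (u.1 ∪ v.1) := subset_compl_iff_disjoint_right.mp hw
  let w' : {s : Finset (Fin (2 * n + k)) // s.card = n} := ⟨w, hwcard⟩
  have huw : (KneserGraph (2 * n + k) n).Adj u w' :=
    adj_of_disjoint hn.ne' (hwuv.mono_right subset_union_left).symm
  have hwv : (KneserGraph (2 * n + k) n).Adj w' v :=
    adj_of_disjoint hn.ne' (hwuv.mono_right subset_union_right)
  exact ⟨.cons huw (.cons hwv .nil), by simp⟩

theorem exists_exchange {u v : {s : Finset (Fin (2 * n + k)) // s.card = n}}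
    (h : #(u.1 ∩ v.1) + k ≤ n) :
    ∃ w : {s : Finset (Fin (2 * n + k)) // s.card = n},
      n ≤ #(u.1 ∩ w.1) + k ∧ #(u.1 ∩ v.1) + k ≤ #(w.1 ∩ v.1) := by
  have hu := card_sdiff_add_card_inter u.1 v.1
  have hv := card_sdiff_add_card_inter v.1 u.1
  rw [u.2] at hu
  rw [v.2, inter_comm] at hv
  obtain ⟨B, hB, hBcard⟩ := exists_subset_card_eq (s := u.1 \ v.1) (n := k) (by omega)
  obtain ⟨T, hT, hTcard⟩ := exists_subset_card_eq (s := v.1 \ u.1) (n := k) (by omega)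
  have hBu : B ⊆ u.1 := hB.trans sdiff_subset
  have hTu : Disjoint T u.1 := sdiff_disjoint.mono_left hT
  have hwcard : #((u.1 \ B) ∪ T) = n := by
    rw [card_union_of_disjoint (hTu.mono_right sdiff_subset).symm, card_sdiff_of_subset hBu,
      hTcard, u.2, hBcard]
    omega
  refine ⟨⟨(u.1 \ B) ∪ T, hwcard⟩, ?_, ?_⟩
  · show n ≤ #(u.1 ∩ ((u.1 \ B) ∪ T)) + k
    have := card_le_card
      (subset_inter sdiff_subset subset_union_left : u.1 \ B ⊆ u.1 ∩ ((u.1 \ B) ∪ T))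
    rw [card_sdiff_of_subset hBu, hBcard, u.2] at this
    omega
  · have hsub : (u.1 ∩ v.1) ∪ T ⊆ ((u.1 \ B) ∪ T) ∩ v.1 := by
      intro x
      have := @hB x
      have := @hT x
      simp only [mem_union, mem_inter, mem_sdiff] at *
      tauto
    have := card_le_card hsub
    rwa [card_union_of_disjoint (hTu.mono_right inter_subset_left).symm, hTcard] at this

theorem exists_walk_length_le_two_mul (c : ℕ) {u v : {s : Finset (Fin (2 * n + k)) // s.card = n}}
    (h : n ≤ #(u.1 ∩ v.1) + c * k) :
    ∃ p : (KneserGraph (2 * n + k) n).Walk u v, p.length ≤ 2 * c := by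
  induction c generalizing u with
  | zero =>
    obtain rfl := eq_of_le_card_inter (by simpa using h)
    exact ⟨.nil, by simp⟩
  | succ c ih =>
    by_cases hclose : n ≤ #(u.1 ∩ v.1) + k
    · obtain ⟨p, hp⟩ := exists_walk_length_le_two hclose
      exact ⟨p, by omega⟩
    obtain ⟨w, huw, hwv⟩ := exists_exchange (by omega : #(u.1 ∩ v.1) + k ≤ n)
    obtain ⟨p, hp⟩ := exists_walk_length_le_two huw
    obtain ⟨q, hq⟩ := ih (by rw [add_mul, one_mul] at h; omega : n ≤ #(w.1 ∩ v.1) + c * k)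
    exact ⟨p.append q, by rw [Walk.length_append]; omega⟩

theorem dist_le_two_mul {u v : {s : Finset (Fin (2 * n + k)) // s.card = n}} {c : ℕ}
    (h : n ≤ #(u.1 ∩ v.1) + c * k) : (KneserGraph (2 * n + k) n).dist u v ≤ 2 * c :=
  have ⟨p, hp⟩ := exists_walk_length_le_two_mul c h
  (dist_le p).trans hp

end KneserGraph

theorem sub_one_le_two_mul_mul_ceil {n k : ℕ} (hk : 0 < k) :
    (n : ℤ) - 1 ≤ 2 * k * ⌈((n : ℚ) - 1) / (2 * k)⌉ := by
  have h := Int.le_ceil (((n : ℚ) - 1) / (2 * k))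
  rw [div_le_iff₀ (by positivity)] at h
  have h' : ((n - 1 : ℤ) : ℚ) ≤ ((2 * k * ⌈((n : ℚ) - 1) / (2 * k)⌉ : ℤ) : ℚ) := by
    push_cast
    linarith
  exact_mod_cast h'

theorem le_add_mul_of_pInt_add_Hfun_lt {n k s t : ℕ} (h : pInt n k + Hfun n k < s)
    (ht : s ≤ t * k) : n ≤ s + t * k := by
  rcases Nat.eq_zero_or_pos k with rfl | hk
  · simp [pInt] at h
    omega
  have hq := sub_one_le_two_mul_mul_ceil (n := n) hk
  unfold pInt Hfun at h
  generalize ⌈((n : ℚ) - 1) / (2 * k)⌉ = q at h hq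
  have hR := Nat.mod_lt n hk
  rw [← Nat.div_add_mod n k] at hq ⊢
  generalize n / k = M at hq ⊢
  generalize n % k = R at h hq hR ⊢
  have hkz : (0 : ℤ) < k := by exact_mod_cast hk
  zify at ht ⊢
  push_cast at hq
  split_ifs at h with hR1
  · rcases Nat.lt_or_ge k 2 with hk1 | hk2
    · obtain rfl : k = 1 := by omega
      obtain rfl : R = 0 := by omega
      push_cast at *
      linarith
    · push_cast [Nat.cast_sub (by omega : 2 ≤ R + k)] at h
      have hqt : q ≤ t := by
        have : q * k < (t + 1) * k := by linarith
        have := lt_of_mul_lt_mul_right this hkz.le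
        linarith
      have hMq : M ≤ 2 * q := by
        have : k * M < k * (2 * q + 1) := by linarith
        have := lt_of_mul_lt_mul_left this hkz.le
        linarith
      linarith [mul_le_mul_of_nonneg_right hqt hkz.le, mul_le_mul_of_nonneg_left hMq hkz.le]
  · push_cast [Nat.cast_sub (by omega : 2 ≤ R)] at h
    have hqt : q ≤ t := by
      have : (q - 1) * k < t * k := by linarith
      have := lt_of_mul_lt_mul_right this hkz.le
      linarith
    have hMq : M + 1 ≤ 2 * q := by
      have : k * M < k * (2 * q) := by linarith
      have := lt_of_mul_lt_mul_left this hkz.le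
      linarith
    linarith [mul_le_mul_of_nonneg_right hqt hkz.le, mul_le_mul_of_nonneg_left hMq hkz.le]

theorem even_dist_of_large_intersection_general
    (n k : ℕ)
    (u v : {s : Finset (Fin (2 * n + k)) // s.card = n})
    (h : pInt n k + (Hfun n k : ℤ) < ((u.1 ∩ v.1).card : ℤ)) :
    Even ((KneserGraph (2 * n + k) n).dist u v) := by
  rw [← Nat.not_odd_iff_even]
  rintro ⟨t, hdist⟩
  have hst := KneserGraph.card_inter_le_of_dist_eq hdist
  have hshort := KneserGraph.dist_le_two_mul (le_add_mul_of_pInt_add_Hfun_lt h hst)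
  omega

theorem even_dist_of_large_intersection
    (n k : ℕ) (hn : 0 < n) (hk : 0 < k)
    (u v : {s : Finset (Fin (2 * n + k)) // s.card = n}) (huv : u ≠ v)
    (h : pInt n k + (Hfun n k : ℤ) < ((u.1 ∩ v.1).card : ℤ)) :
    Even ((KneserGraph (2 * n + k) n).dist u v) :=
  even_dist_of_large_intersection_general n k u v h
end

section
/- Let n ≥ 2 and k be positive integers with k ≥ n-1 (so that K(2n+k,n) has diameter two). Then the geodetic hull number of K(2n+k,n) equals 3 if and only if (n,k) ∈ {(2,1), (2,2), (3,2)}, i.e., the only Kneser graphs of diameter two with geodetic hull number three are K(5,2), K(6,2), and K(8,3). -/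
/-!
If `u ≠ v` are intersecting vertices of `K(2n+k, n)` with `k ≥ n - 1`, they are at distance two
and their common neighbours are exactly the vertices disjoint from `u ∪ v`; so a g-convex set
containing `u` and `v` contains every vertex avoiding `u ∪ v`.

For `k ≥ 3` this spreads. Start from two vertices with `|u ∪ v| = n + 1`. If the hull contains
the avoiders of an `(n+1)`-set `U'`, it contains those of every `(n+1)`-set disjoint from `U'`;
since `k ≥ 3`, an `(n+1)`-set `U` obtained from `U'` by exchanging one element has an
`(n+1)`-set disjoint from both, so the property passes from `U'` to `U`. Exchanges connect all
`(n+1)`-sets, and every vertex avoids one of them: two vertices suffice.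

For `k ≤ 2` (hence `n ≤ 3`) every pair of vertices lies in a proper g-convex set: the vertices
inside `D` or inside `Dᶜ` for an `(n+1)`-set `D`, or `{u, v, (u ∪ v)ᶜ}` when
`|(u ∪ v)ᶜ| = n`. So at least three vertices are needed, and in `K(5,2)`, `K(6,2)` and
`K(8,3)` three vertices sharing `n - 1` points generate everything, as an explicit derivation
checks.
-/

section GeodeticConvexity

open SimpleGraph

variable {V : Type*} {G : SimpleGraph V} {u v w : V} {W C : Set V}

theorem mem_geodIntervalSet_iff {x : V} :
    x ∈ geodIntervalSet G W ↔ ∃ u ∈ W, ∃ v ∈ W, x ∈ geodInterval G u v := by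
  simp [geodIntervalSet]

theorem isGConvex_iff : IsGConvex G C ↔ ∀ u ∈ C, ∀ v ∈ C, geodInterval G u v ⊆ C := by
  refine ⟨fun h u hu v hv x hx => h ▸ mem_geodIntervalSet_iff.2 ⟨u, hu, v, hv, hx⟩,
    fun h => (Set.Subset.antisymm ?_ fun x hx => ?_)⟩
  · intro x hx
    obtain ⟨u, hu, v, hv, hx⟩ := mem_geodIntervalSet_iff.1 hx
    exact h u hu v hv hx
  · exact mem_geodIntervalSet_iff.2 ⟨x, hx, x, hx, by simp [geodInterval]⟩

theorem isGeodHullSet_iff :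
    IsGeodHullSet G W ↔ ∀ C, IsGConvex G C → W ⊆ C → C = Set.univ := by
  refine ⟨fun h C hC hWC =>
    Set.eq_univ_of_univ_subset (h ▸ Set.sInter_subset_of_mem ⟨hC, hWC⟩),
    fun h => Set.eq_univ_of_forall fun x => Set.mem_sInter.2 fun C ⟨hC, hWC⟩ => ?_⟩
  rw [h C hC hWC]
  trivial

theorem geodHullNumber_le_ncard (hW : IsGeodHullSet G W) : geodHullNumber G ≤ W.ncard :=
  Nat.sInf_le ⟨W, hW, rfl⟩

theorem geodHullNumber_eq_three [Finite V] (hW : IsGeodHullSet G W) (hW3 : W.ncard = 3)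
    (hpair : ∀ x y : V, ∃ C, IsGConvex G C ∧ x ∈ C ∧ y ∈ C ∧ C ≠ Set.univ) :
    geodHullNumber G = 3 := by
  refine le_antisymm (hW3 ▸ geodHullNumber_le_ncard hW) (le_csInf ⟨3, W, hW, hW3⟩ ?_)
  rintro _ ⟨W', hW', rfl⟩
  by_contra! hlt
  obtain ⟨a, -⟩ := Set.nonempty_of_ncard_ne_zero (hW3 ▸ three_ne_zero : W.ncard ≠ 0)
  obtain ⟨x, y, hxy⟩ : ∃ x y, W' ⊆ {x, y} := by
    interval_cases h : W'.ncard
    · exact ⟨a, a, by simp [(Set.ncard_eq_zero W'.toFinite).1 h]⟩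
    · obtain ⟨x, rfl⟩ := Set.ncard_eq_one.1 h
      exact ⟨x, x, by simp⟩
    · obtain ⟨x, y, -, rfl⟩ := Set.ncard_eq_two.1 h
      exact ⟨x, y, subset_rfl⟩
  obtain ⟨C, hC, hxC, hyC, hCne⟩ := hpair x y
  exact hCne (isGeodHullSet_iff.1 hW' C hC (hxy.trans (Set.insert_subset hxC (by simpa))))

theorem mem_geodInterval_of_adj_of_adj (hne : u ≠ v) (hnadj : ¬ G.Adj u v) (h₁ : G.Adj u w)
    (h₂ : G.Adj w v) : w ∈ geodInterval G u v := by
  have hle : G.dist u v ≤ 2 := dist_le (h₁.toWalk.append h₂.toWalk)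
  have hlt := (h₁.reachable.trans h₂.reachable).one_lt_dist_of_ne_of_not_adj hne hnadj
  show G.dist u w + G.dist w v = G.dist u v
  rw [dist_eq_one_iff_adj.2 h₁, dist_eq_one_iff_adj.2 h₂]
  omega

theorem mem_geodInterval_iff_of_dist_le_two (hG : G.Preconnected) (huv : G.dist u v ≤ 2) :
    w ∈ geodInterval G u v ↔
      w = u ∨ w = v ∨ (u ≠ v ∧ ¬ G.Adj u v ∧ G.Adj u w ∧ G.Adj w v) := by
  refine ⟨fun h => ?_, ?_⟩
  · by_cases hwu : w = u
    · exact .inl hwu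
    by_cases hwv : w = v
    · exact .inr (.inl hwv)
    replace h : G.dist u w + G.dist w v = G.dist u v := h
    have h₁ := (hG u w).pos_dist_of_ne (Ne.symm hwu)
    have h₂ := (hG w v).pos_dist_of_ne hwv
    have hadj₁ : G.Adj u w := dist_eq_one_iff_adj.1 (by omega)
    have hadj₂ : G.Adj w v := dist_eq_one_iff_adj.1 (by omega)
    refine .inr (.inr ⟨fun huv => ?_, fun hadj => ?_, hadj₁, hadj₂⟩)
    · subst huv; rw [dist_self] at h; omega
    · rw [dist_eq_one_iff_adj.2 hadj] at h; omega
  · rintro (rfl | rfl | ⟨hne, hnadj, h₁, h₂⟩)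
    · simp [geodInterval]
    · simp [geodInterval]
    · exact mem_geodInterval_of_adj_of_adj hne hnadj h₁ h₂

end GeodeticConvexity

namespace KneserGraph

open Finset SimpleGraph

abbrev Vertex (M n : ℕ) := {s : Finset (Fin M) // s.card = n}

variable {M n : ℕ} {u v w : Vertex M n}

theorem card_add_card_compl_fin (s : Finset (Fin M)) : #s + #sᶜ = M := by
  simp [s.card_add_card_compl]

theorem card_union_add_one_le (huv : ¬ Disjoint u.1 v.1) : #(u.1 ∪ v.1) + 1 ≤ 2 * n := by
  have := card_union_add_card_inter u.1 v.1
  have := (not_disjoint_iff_nonempty_inter.1 huv).card_pos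
  rw [u.2, v.2] at *
  omega

theorem succ_le_card_union (huv : u ≠ v) : n + 1 ≤ #(u.1 ∪ v.1) := by
  by_contra! h
  have hu : u.1 = u.1 ∪ v.1 := eq_of_subset_of_card_le subset_union_left (by rw [u.2]; omega)
  have hv : v.1 = u.1 ∪ v.1 := eq_of_subset_of_card_le subset_union_right (by rw [v.2]; omega)
  exact huv (Subtype.ext (hu.trans hv.symm))

theorem adj_iff_disjoint (hn : 0 < n) : (KneserGraph M n).Adj u v ↔ Disjoint u.1 v.1 := by
  refine ⟨And.left, fun h => ⟨h, fun huv => ?_⟩⟩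
  obtain ⟨a, ha⟩ := card_pos.1 (u.2 ▸ hn)
  exact disjoint_left.1 h ha (huv ▸ ha)

theorem exists_disjoint_union (hM : 3 * n ≤ M + 1) (huv : ¬ Disjoint u.1 v.1) :
    ∃ w : Vertex M n, Disjoint w.1 (u.1 ∪ v.1) := by
  have := card_union_add_one_le huv
  have := card_add_card_compl_fin (u.1 ∪ v.1)
  obtain ⟨t, ht, htn⟩ := exists_subset_card_eq (s := (u.1 ∪ v.1)ᶜ) (n := n) (by omega)
  exact ⟨⟨t, htn⟩, subset_compl_iff_disjoint_right.1 ht⟩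

theorem exists_adj_adj (hn : 0 < n) (hM : 3 * n ≤ M + 1) (huv : ¬ Disjoint u.1 v.1) :
    ∃ w, (KneserGraph M n).Adj u w ∧ (KneserGraph M n).Adj w v := by
  obtain ⟨w, hw⟩ := exists_disjoint_union hM huv
  rw [disjoint_union_right] at hw
  exact ⟨w, (adj_iff_disjoint hn).2 hw.1.symm, (adj_iff_disjoint hn).2 hw.2⟩

theorem preconnected (hn : 0 < n) (hM : 3 * n ≤ M + 1) : (KneserGraph M n).Preconnected := by
  intro u v
  by_cases huv : Disjoint u.1 v.1
  · exact ((adj_iff_disjoint hn).2 huv).reachable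
  · obtain ⟨w, huw, hwv⟩ := exists_adj_adj hn hM huv
    exact huw.reachable.trans hwv.reachable

theorem dist_le_two (hn : 0 < n) (hM : 3 * n ≤ M + 1) (u v : Vertex M n) :
    (KneserGraph M n).dist u v ≤ 2 := by
  by_cases huv : Disjoint u.1 v.1
  · simp [dist_eq_one_iff_adj.2 ((adj_iff_disjoint hn).2 huv)]
  · obtain ⟨w, huw, hwv⟩ := exists_adj_adj hn hM huv
    exact dist_le (huw.toWalk.append hwv.toWalk)

theorem mem_geodInterval_iff (hn : 0 < n) (hM : 3 * n ≤ M + 1) :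
    w ∈ geodInterval (KneserGraph M n) u v ↔
      w = u ∨ w = v ∨ (u ≠ v ∧ ¬ Disjoint u.1 v.1 ∧ Disjoint w.1 (u.1 ∪ v.1)) := by
  rw [mem_geodInterval_iff_of_dist_le_two (preconnected hn hM) (dist_le_two hn hM u v),
    adj_iff_disjoint hn, adj_iff_disjoint hn, adj_iff_disjoint hn, disjoint_union_right,
    disjoint_comm (a := u.1) (b := w.1)]

def avoiders (D : Finset (Fin M)) : Set (Vertex M n) := {w | Disjoint w.1 D}

theorem avoiders_subset_of_mem {S : Set (Vertex M n)} (hn : 0 < n)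
    (hS : IsGConvex (KneserGraph M n) S) (hu : u ∈ S) (hv : v ∈ S) (huv : u ≠ v)
    (h : ¬ Disjoint u.1 v.1) : avoiders (u.1 ∪ v.1) ⊆ S := fun _ hw => by
  rw [avoiders, Set.mem_ofPred, disjoint_union_right] at hw
  refine isGConvex_iff.1 hS u hu v hv (mem_geodInterval_of_adj_of_adj huv ?_ ?_ ?_) <;>
    rw [adj_iff_disjoint hn]
  exacts [h, hw.1.symm, hw.2]

section Blocking

def oneSided (D : Finset (Fin M)) : Set (Vertex M n) := {w | w.1 ⊆ D ∨ w.1 ⊆ Dᶜ}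

theorem union_eq_of_subset {D : Finset (Fin M)} (hD : #D ≤ n + 1) (hu : u.1 ⊆ D)
    (hv : v.1 ⊆ D) (huv : u ≠ v) : u.1 ∪ v.1 = D :=
  eq_of_subset_of_card_le (union_subset hu hv) (hD.trans (succ_le_card_union huv))

theorem isGConvex_oneSided (hn : 0 < n) (hM : 3 * n ≤ M + 1) {D : Finset (Fin M)}
    (hD : #D ≤ n + 1) (hDc : #Dᶜ ≤ n + 1) : IsGConvex (KneserGraph M n) (oneSided D) := by
  refine isGConvex_iff.2 fun u hu v hv w hw => ?_
  obtain rfl | rfl | ⟨huv, hint, hw⟩ := (mem_geodInterval_iff hn hM).1 hw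
  · exact hu
  · exact hv
  rw [← subset_compl_iff_disjoint_right] at hw
  have hmixed : ∀ {E : Finset (Fin M)}, u.1 ⊆ E → v.1 ⊆ Eᶜ → False := fun hu hv =>
    hint (disjoint_of_subset_left hu (disjoint_of_subset_right hv disjoint_compl_right))
  rcases hu with hu | hu <;> rcases hv with hv | hv
  · exact .inr (union_eq_of_subset hD hu hv huv ▸ hw)
  · exact (hmixed hu hv).elim
  · exact (hmixed (E := Dᶜ) hu (by rwa [compl_compl])).elim
  · exact .inl (by simpa [union_eq_of_subset hDc hu hv huv] using hw)

theorem isGConvex_triple (hn : 0 < n) (hM : 3 * n ≤ M + 1) (hc : #(u.1 ∪ v.1)ᶜ = n) :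
    IsGConvex (KneserGraph M n) {u, v, ⟨(u.1 ∪ v.1)ᶜ, hc⟩} := by
  set z : Vertex M n := ⟨(u.1 ∪ v.1)ᶜ, hc⟩
  have hzu : Disjoint z.1 u.1 := disjoint_compl_left.mono_right subset_union_left
  have hzv : Disjoint z.1 v.1 := disjoint_compl_left.mono_right subset_union_right
  refine isGConvex_iff.2 fun a ha b hb w hw => ?_
  obtain rfl | rfl | ⟨hab, hint, hw⟩ := (mem_geodInterval_iff hn hM).1 hw
  · exact ha
  · exact hb
  -- `z` is disjoint from `u` and `v`, so the only intersecting pair is `{u, v}`.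
  suffices a.1 ∪ b.1 = u.1 ∪ v.1 from .inr (.inr (Subtype.ext (eq_of_subset_of_card_le
    (subset_compl_iff_disjoint_right.2 (this ▸ hw)) (by rw [w.2, hc]))))
  rcases ha with rfl | rfl | rfl <;> rcases hb with rfl | rfl | rfl <;>
    first
    | exact absurd rfl hab
    | rfl
    | exact union_comm _ _
    | exact absurd hzu hint | exact absurd hzv hint
    | exact absurd hzu.symm hint | exact absurd hzv.symm hint

theorem oneSided_ne_univ (hn : 2 ≤ n) (hnM : n ≤ M) {D : Finset (Fin M)} (hD : D.Nonempty)
    (hDc : Dᶜ.Nonempty) : oneSided D ≠ (Set.univ : Set (Vertex M n)) := by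
  obtain ⟨a, ha⟩ := hD
  obtain ⟨b, hb⟩ := hDc
  have hab : #{a, b} ≤ n := (card_le_two).trans hn
  obtain ⟨t, hab, ht⟩ := exists_superset_card_eq hab (by simpa using hnM)
  intro h
  have htD : (⟨t, ht⟩ : Vertex M n) ∈ oneSided D := h ▸ Set.mem_univ _
  obtain htD | htD := htD
  · exact mem_compl.1 hb (htD (hab (by simp)))
  · exact mem_compl.1 (htD (hab (by simp))) ha

theorem exists_isGConvex_ne_univ {k : ℕ} (hn : 2 ≤ n) (hk : k ≤ 2) (hnk : n ≤ k + 1)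
    (x y : Vertex (2 * n + k) n) :
    ∃ C, IsGConvex (KneserGraph (2 * n + k) n) C ∧ x ∈ C ∧ y ∈ C ∧ C ≠ Set.univ := by
  have hM : 3 * n ≤ 2 * n + k + 1 := by omega
  have hside : ∀ D : Finset (Fin (2 * n + k)), #D = n + 1 →
      IsGConvex (KneserGraph (2 * n + k) n) (oneSided D) ∧ oneSided (n := n) D ≠ Set.univ := by
    intro D hD
    have := card_add_card_compl_fin D
    exact ⟨isGConvex_oneSided (by omega) hM (by omega) (by omega),
      oneSided_ne_univ hn (by omega) (card_pos.1 (by omega)) (card_pos.1 (by omega))⟩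
  by_cases hxy : Disjoint x.1 y.1
  · have := card_add_card_compl_fin (x.1 ∪ y.1)
    rw [card_union_of_disjoint hxy, x.2, y.2] at this
    obtain ⟨a, ha⟩ := card_pos.1 (show 0 < #(x.1 ∪ y.1)ᶜ by omega)
    have haxy : a ∉ x.1 ∧ a ∉ y.1 := by simpa using ha
    have hD : #(insert a x.1) = n + 1 := by rw [card_insert_of_notMem haxy.1, x.2]
    exact ⟨oneSided (insert a x.1), (hside _ hD).1, .inl (subset_insert _ _),
      .inr (subset_compl_iff_disjoint_right.2 (disjoint_insert_right.2 ⟨haxy.2, hxy.symm⟩)),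
      (hside _ hD).2⟩
  by_cases hsmall : #(x.1 ∪ y.1) ≤ n + 1
  · obtain ⟨D, hD, hDc⟩ := exists_superset_card_eq hsmall (by simp; omega)
    exact ⟨oneSided D, (hside D hDc).1, .inl (subset_union_left.trans hD),
      .inl (subset_union_right.trans hD), (hside D hDc).2⟩
  have := card_union_add_one_le hxy
  have := card_add_card_compl_fin (x.1 ∪ y.1)
  have hc : #(x.1 ∪ y.1)ᶜ = n := by omega
  refine ⟨_, isGConvex_triple (by omega) hM hc, by simp, by simp, fun h =>
    oneSided_ne_univ hn (by omega) (D := x.1 ∪ y.1) (card_pos.1 (by omega))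
      (card_pos.1 (by omega)) (Set.eq_univ_of_univ_subset (h ▸ ?_))⟩
  rintro w (rfl | rfl | rfl)
  · exact .inl subset_union_left
  · exact .inl subset_union_right
  · exact .inr subset_rfl

end Blocking

section Spreading

variable {S : Set (Vertex M n)} {B D U U' : Finset (Fin M)}

theorem exists_ne_union_eq (hn : 2 ≤ n) (hB : #B = n + 1) :
    ∃ u v : Vertex M n, u ≠ v ∧ ¬ Disjoint u.1 v.1 ∧ u.1 ∪ v.1 = B := by
  obtain ⟨a, ha, b, hb, hab⟩ := one_lt_card.1 (show 1 < #B by omega)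
  have hcard : ∀ c ∈ B, #(B.erase c) = n := fun c hc => by rw [card_erase_of_mem hc, hB]; rfl
  let u : Vertex M n := ⟨B.erase a, hcard a ha⟩
  let v : Vertex M n := ⟨B.erase b, hcard b hb⟩
  have huv : u ≠ v := fun h => by
    have : b ∈ u.1 := mem_erase.2 ⟨Ne.symm hab, hb⟩
    simp [h, v] at this
  have hunion := union_eq_of_subset hB.le (erase_subset a B) (erase_subset b B) huv
  refine ⟨u, v, huv, fun h => ?_, hunion⟩
  have := card_union_of_disjoint h
  rw [hunion, u.2, v.2] at this
  omega

theorem avoiders_subset_of_disjoint (hn : 2 ≤ n) (hS : IsGConvex (KneserGraph M n) S)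
    (hD : avoiders D ⊆ S) (hU : #U = n + 1) (hUD : Disjoint U D) : avoiders U ⊆ S := by
  obtain ⟨u, v, huv, hint, rfl⟩ := exists_ne_union_eq hn hU
  exact avoiders_subset_of_mem (by omega) hS (hD (hUD.mono_left subset_union_left))
    (hD (hUD.mono_left subset_union_right)) huv hint

theorem avoiders_subset_of_card_union_le (hn : 2 ≤ n) (hM : 2 * n + 3 ≤ M)
    (hS : IsGConvex (KneserGraph M n) S) (hU' : avoiders U' ⊆ S) (hU : #U = n + 1)
    (hU'card : #U' = n + 1) (hUU' : #(U ∪ U') ≤ n + 2) : avoiders U ⊆ S := by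
  have := card_add_card_compl_fin (U ∪ U')
  obtain ⟨Z, hZ, hZcard⟩ := exists_subset_card_eq (s := (U ∪ U')ᶜ) (n := n + 1) (by omega)
  rw [subset_compl_iff_disjoint_right, disjoint_union_right] at hZ
  exact avoiders_subset_of_disjoint hn hS
    (avoiders_subset_of_disjoint hn hS hU' hZcard hZ.2) hU hZ.1.symm

theorem avoiders_subset_of_card_eq (hn : 2 ≤ n) (hM : 2 * n + 3 ≤ M)
    (hS : IsGConvex (KneserGraph M n) S) (hB : #B = n + 1) (hBS : avoiders B ⊆ S)
    (hU : #U = n + 1) : avoiders U ⊆ S := by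
  induction hj : #(U \ B) using Nat.strong_induction_on generalizing U with
  | _ j ih =>
    obtain ⟨a, ha⟩ | hUB := (U \ B).eq_empty_or_nonempty.symm
    · obtain ⟨haU, haB⟩ := mem_sdiff.1 ha
      obtain ⟨b, hbB, hbU⟩ : ∃ b ∈ B, b ∉ U := by
        by_contra! h
        exact haB (eq_of_subset_of_card_le h (by omega) ▸ haU)
      set U' := insert b (U.erase a)
      have hU'card : #U' = n + 1 := by
        rw [card_insert_of_notMem (fun h => hbU (mem_of_mem_erase h)), card_erase_of_mem haU,
          hU]
        omega
      have hlt : #(U' \ B) < j := by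
        have hsub : U' \ B ⊆ (U \ B).erase a := by
          intro x; simp only [U', mem_sdiff, mem_insert, mem_erase]; grind
        have := card_le_card hsub
        rw [card_erase_of_mem ha] at this
        have := card_pos.2 ⟨a, ha⟩
        omega
      have hUU' : #(U ∪ U') ≤ n + 2 := by
        have : U ∪ U' ⊆ insert b U := by
          intro x; simp only [U', mem_union, mem_insert, mem_erase]; grind
        have := (card_le_card this).trans (card_insert_le b U)
        omega
      exact avoiders_subset_of_card_union_le hn hM hS (ih _ hlt hU'card rfl) hU hU'card hUU'
    · rw [sdiff_eq_empty_iff_subset] at hUB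
      rwa [eq_of_subset_of_card_le hUB (by omega)]

theorem exists_isGeodHullSet_ncard_eq_two (hn : 2 ≤ n) (hM : 2 * n + 3 ≤ M) :
    ∃ W : Set (Vertex M n), IsGeodHullSet (KneserGraph M n) W ∧ W.ncard = 2 := by
  obtain ⟨B, -, hB⟩ := exists_subset_card_eq (s := (univ : Finset (Fin M))) (n := n + 1)
    (by simp; omega)
  obtain ⟨u, v, huv, hint, rfl⟩ := exists_ne_union_eq hn hB
  refine ⟨{u, v}, isGeodHullSet_iff.2 fun C hC huvC => Set.eq_univ_of_forall fun x => ?_,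
    Set.ncard_pair huv⟩
  have := card_add_card_compl_fin x.1
  obtain ⟨U, hU, hUcard⟩ := exists_subset_card_eq (s := x.1ᶜ) (n := n + 1) (by omega)
  refine avoiders_subset_of_card_eq hn hM hC hB ?_ hUcard ?_
  · exact avoiders_subset_of_mem (by omega) hC (huvC (by simp)) (huvC (by simp)) huv hint
  · exact subset_compl_iff_disjoint_right.1 hU |>.symm

theorem geodHullNumber_le_two (hn : 2 ≤ n) (hM : 2 * n + 3 ≤ M) :
    geodHullNumber (KneserGraph M n) ≤ 2 := by
  obtain ⟨W, hW, hW2⟩ := exists_isGeodHullSet_ncard_eq_two hn hM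
  exact hW2 ▸ geodHullNumber_le_ncard hW

end Spreading

section Derivation

/-- A derivation is read from its end: each pair may use only `W` and the pairs after it. -/
def IsDerivation (n : ℕ) (W : Finset (Vertex M n)) :
    List (Finset (Fin M) × Finset (Fin M)) → Prop
  | [] => True
  | (s, t) :: L => IsDerivation n W L ∧ #s = n ∧ #t = n ∧ s ≠ t ∧ ¬ Disjoint s t ∧
      ((∃ w ∈ W, w.1 = s) ∨ ∃ p ∈ L, Disjoint s (p.1 ∪ p.2)) ∧
      ((∃ w ∈ W, w.1 = t) ∨ ∃ p ∈ L, Disjoint t (p.1 ∪ p.2))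

instance decidableIsDerivation (W : Finset (Vertex M n)) : DecidablePred (IsDerivation n W)
  | [] => inferInstanceAs (Decidable True)
  | (_, _) :: L =>
    have := decidableIsDerivation W L
    inferInstanceAs (Decidable (_ ∧ _))

theorem avoiders_subset_of_isDerivation {S : Set (Vertex M n)} {W : Finset (Vertex M n)}
    (hn : 0 < n) (hS : IsGConvex (KneserGraph M n) S) (hWS : ↑W ⊆ S) :
    ∀ {L}, IsDerivation n W L → ∀ p ∈ L, avoiders (p.1 ∪ p.2) ⊆ S
  | (s, t) :: L, ⟨hL, hs, ht, hst, hint, hsW, htW⟩, p, hp => by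
    have ih := avoiders_subset_of_isDerivation hn hS hWS hL
    have mem : ∀ {r : Finset (Fin M)} (hr : #r = n),
        ((∃ w ∈ W, w.1 = r) ∨ ∃ p ∈ L, Disjoint r (p.1 ∪ p.2)) →
          (⟨r, hr⟩ : Vertex M n) ∈ S := by
      rintro r hr (⟨w, hw, rfl⟩ | ⟨q, hq, hrq⟩)
      · exact hWS hw
      · exact ih q hq hrq
    obtain rfl | hp := List.mem_cons.1 hp
    · exact avoiders_subset_of_mem hn hS (mem hs hsW) (mem ht htW)
        (fun h => hst (congrArg Subtype.val h)) hint
    · exact ih p hp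

theorem isGeodHullSet_of_isDerivation {W : Finset (Vertex M n)} {L} (hn : 0 < n)
    (hL : IsDerivation n W L)
    (hcover : ∀ x : Vertex M n, x ∈ W ∨ ∃ p ∈ L, Disjoint x.1 (p.1 ∪ p.2)) :
    IsGeodHullSet (KneserGraph M n) ↑W := by
  refine isGeodHullSet_iff.2 fun C hC hWC => Set.eq_univ_of_forall fun x => ?_
  obtain hx | ⟨p, hp, hx⟩ := hcover x
  · exact hWC hx
  · exact avoiders_subset_of_isDerivation hn hC hWC hL p hp hx

theorem geodHullNumber_eq_three_of_isDerivation {k : ℕ} (hn : 2 ≤ n) (hk : k ≤ 2)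
    (hnk : n ≤ k + 1) {W : Finset (Vertex (2 * n + k) n)} (hW : #W = 3) {L}
    (hL : IsDerivation n W L)
    (hcover : ∀ x : Vertex (2 * n + k) n, x ∈ W ∨ ∃ p ∈ L, Disjoint x.1 (p.1 ∪ p.2)) :
    geodHullNumber (KneserGraph (2 * n + k) n) = 3 :=
  geodHullNumber_eq_three (isGeodHullSet_of_isDerivation (by omega) hL hcover)
    (by rwa [Set.ncard_coe_finset]) (exists_isGConvex_ne_univ hn hk hnk)

end Derivation

theorem geodHullNumber_five_two : geodHullNumber (KneserGraph 5 2) = 3 :=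
  geodHullNumber_eq_three_of_isDerivation (n := 2) (k := 1) (by norm_num) (by norm_num)
    (by norm_num) (W := {⟨{0, 1}, rfl⟩, ⟨{0, 2}, rfl⟩, ⟨{0, 3}, rfl⟩}) (by decide)
    (L := [({1, 2}, {1, 3}), ({0, 3}, {3, 4}), ({0, 2}, {2, 4}), ({0, 1}, {1, 4}),
      ({0, 2}, {0, 3}), ({0, 1}, {0, 3}), ({0, 1}, {0, 2})]) (by decide) (by decide)

theorem geodHullNumber_six_two : geodHullNumber (KneserGraph 6 2) = 3 :=
  geodHullNumber_eq_three_of_isDerivation (n := 2) (k := 2) (by norm_num) (by norm_num)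
    (by norm_num) (W := {⟨{0, 1}, rfl⟩, ⟨{0, 2}, rfl⟩, ⟨{0, 3}, rfl⟩}) (by decide)
    (L := [({1, 2}, {1, 3}), ({0, 2}, {2, 5}), ({0, 1}, {1, 5}), ({0, 3}, {3, 4}),
      ({0, 1}, {0, 2})]) (by decide) (by decide)

theorem geodHullNumber_eight_three : geodHullNumber (KneserGraph 8 3) = 3 :=
  geodHullNumber_eq_three_of_isDerivation (n := 3) (k := 2) (by norm_num) (by norm_num)
    (by norm_num) (W := {⟨{0, 1, 2}, rfl⟩, ⟨{0, 1, 3}, rfl⟩, ⟨{0, 1, 4}, rfl⟩})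
    (by decide)
    (L := [({1, 2, 4}, {1, 2, 5}), ({2, 3, 4}, {2, 3, 7}), ({1, 3, 6}, {1, 3, 7}),
      ({0, 2, 3}, {0, 2, 7}), ({0, 1, 7}, {0, 5, 7}), ({1, 2, 3}, {1, 2, 4}),
      ({0, 2, 6}, {2, 5, 6}), ({1, 5, 6}, {4, 5, 6}), ({0, 2, 4}, {0, 3, 4}),
      ({1, 3, 5}, {3, 5, 7}), ({0, 4, 7}, {4, 6, 7}), ({0, 3, 5}, {3, 5, 6}),
      ({1, 2, 6}, {2, 6, 7}), ({0, 4, 7}, {4, 5, 7}), ({2, 5, 6}, {3, 5, 6}),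
      ({0, 1, 3}, {0, 1, 4}), ({0, 1, 2}, {0, 1, 4}), ({0, 1, 2}, {0, 1, 3})]) (by decide)
    (by decide)

end KneserGraph

theorem geodHullNumber_eq_three_iff_general
    (n k : ℕ) (hn : 2 ≤ n) (hkn : n - 1 ≤ k) :
    geodHullNumber (KneserGraph (2 * n + k) n) = 3 ↔
      (n = 2 ∧ k = 1) ∨ (n = 2 ∧ k = 2) ∨ (n = 3 ∧ k = 2) := by
  constructor
  · intro h
    by_contra hsmall
    have := KneserGraph.geodHullNumber_le_two hn (M := 2 * n + k) (by omega)
    omega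
  · rintro (⟨rfl, rfl⟩ | ⟨rfl, rfl⟩ | ⟨rfl, rfl⟩)
    · exact KneserGraph.geodHullNumber_five_two
    · exact KneserGraph.geodHullNumber_six_two
    · exact KneserGraph.geodHullNumber_eight_three

theorem geodHullNumber_eq_three_iff
    (n k : ℕ) (hn : 2 ≤ n) (hk : 0 < k) (hkn : n - 1 ≤ k) :
    geodHullNumber (KneserGraph (2 * n + k) n) = 3 ↔
      (n = 2 ∧ k = 1) ∨ (n = 2 ∧ k = 2) ∨ (n = 3 ∧ k = 2) :=
  geodHullNumber_eq_three_iff_general n k hn hkn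
end
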